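/- Given a two-level (lax-Gray) adjunction (F, U, η, ε, f, u), the derived data satisfies the coherence axiom [Mp]: for every object X of 𝕏, the composite 2-cell μ_X ∘ T(μ_X) ∘ T²(η_X) ⟹ μ_X ∘ μ_{TX} ∘ T²(η_X) ⟹ μ_X ∘ T(η_X) ∘ μ_X ⟹ μ_X given by (p_X ◁ μ_X) ∙ (μ_X ▷ μ_{η_X}) ∙ (a_X ◁ T²(η_X)) equals the 2-cell μ_X ▷ T(p_X) : μ_X ∘ (T(μ_X) ∘ T²(η_X)) ⟹ μ_X, where μ_{η_X} : μ_{TX} ∘ T²(η_X) ⟹ T(η_X) ∘ μ_X is the lax-naturality 2-cell of μ at the 1-cell η_X and T(p_X) = UF(p_X). -/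

import Mathlib

open CategoryTheory

local infixr:81 " ◁ " => Bicategory.whiskerLeft
local infixl:81 " ▷ " => Bicategory.whiskerRight

universe w₁ w₂ w₃ v₁ v₂ v₃ u₁ u₂ u₃

/-- A strict 2-functor between strict bicategories: it preserves identities and
compositions of 1-cells on the nose, is functorial on 2-cells, and is compatible
with whiskering. -/
structure Strict2Functor (B : Type u₁) (C : Type u₂) [Bicategory.{w₁, v₁} B]
    [Bicategory.Strict B] [Bicategory.{w₂, v₂} C] [Bicategory.Strict C] where
  obj : B → C
  map : ∀ {a b : B}, (a ⟶ b) → (obj a ⟶ obj b)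
  map₂ : ∀ {a b : B} {f g : a ⟶ b}, (f ⟶ g) → (map f ⟶ map g)
  map_id : ∀ a : B, map (𝟙 a) = 𝟙 (obj a)
  map_comp : ∀ {a b c : B} (f : a ⟶ b) (g : b ⟶ c), map (f ≫ g) = map f ≫ map g
  map₂_id : ∀ {a b : B} (f : a ⟶ b), map₂ (𝟙 f) = 𝟙 (map f)
  map₂_comp : ∀ {a b : B} {f g h : a ⟶ b} (η : f ⟶ g) (θ : g ⟶ h),
    map₂ (η ≫ θ) = map₂ η ≫ map₂ θ
  map₂_whiskerLeft : ∀ {a b c : B} (f : a ⟶ b) {g h : b ⟶ c} (η : g ⟶ h),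
    map₂ (f ◁ η) = eqToHom (map_comp f g) ≫ (map f ◁ map₂ η) ≫ eqToHom (map_comp f h).symm
  map₂_whiskerRight : ∀ {a b c : B} {f g : a ⟶ b} (η : f ⟶ g) (h : b ⟶ c),
    map₂ (η ▷ h) = eqToHom (map_comp f h) ≫ (map₂ η ▷ map h) ≫ eqToHom (map_comp g h).symm

namespace Strict2Functor

variable {B : Type u₁} {C : Type u₂} {D : Type u₃} [Bicategory.{w₁, v₁} B] [Bicategory.Strict B]
  [Bicategory.{w₂, v₂} C] [Bicategory.Strict C] [Bicategory.{w₃, v₃} D] [Bicategory.Strict D]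

lemma map₂_eqToHom (F : Strict2Functor B C) {a b : B} {f g : a ⟶ b} (h : f = g) :
    F.map₂ (eqToHom h) = eqToHom (congrArg F.map h) := by
  subst h; simp [F.map₂_id]

/-- The identity strict 2-functor. -/
def id (B : Type u₁) [Bicategory.{w₁, v₁} B] [Bicategory.Strict B] : Strict2Functor B B where
  obj a := a
  map f := f
  map₂ η := η
  map_id _ := rfl
  map_comp _ _ := rfl
  map₂_id _ := rfl
  map₂_comp _ _ := rfl
  map₂_whiskerLeft _ _ := by simp
  map₂_whiskerRight _ _ := by simp

/-- Composition of strict 2-functors (diagrammatic order). -/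
def comp (F : Strict2Functor B C) (G : Strict2Functor C D) : Strict2Functor B D where
  obj a := G.obj (F.obj a)
  map f := G.map (F.map f)
  map₂ η := G.map₂ (F.map₂ η)
  map_id a := by rw [F.map_id, G.map_id]
  map_comp f g := by rw [F.map_comp, G.map_comp]
  map₂_id f := by rw [F.map₂_id, G.map₂_id]
  map₂_comp η θ := by rw [F.map₂_comp, G.map₂_comp]
  map₂_whiskerLeft := by
    intro a b c f g h η
    rw [F.map₂_whiskerLeft, G.map₂_comp, G.map₂_comp, G.map₂_eqToHom, G.map₂_eqToHom,
      G.map₂_whiskerLeft]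
    simp [eqToHom_trans]
  map₂_whiskerRight := by
    intro a b c f g η h
    rw [F.map₂_whiskerRight, G.map₂_comp, G.map₂_comp, G.map₂_eqToHom, G.map₂_eqToHom,
      G.map₂_whiskerRight]
    simp [eqToHom_trans]

end Strict2Functor

variable {B : Type u₁} {C : Type u₂} {D : Type u₃} [Bicategory.{w₁, v₁} B] [Bicategory.Strict B]
  [Bicategory.{w₂, v₂} C] [Bicategory.Strict C] [Bicategory.{w₃, v₃} D] [Bicategory.Strict D]

/-- The data of a lax natural transformation: components and naturality 2-cells. -/
structure LaxTransCore (S T : Strict2Functor B C) where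
  app : ∀ a : B, S.obj a ⟶ T.obj a
  naturality : ∀ {a b : B} (g : a ⟶ b), S.map g ≫ app b ⟶ app a ≫ T.map g

/-- A lax natural transformation between strict 2-functors: components `app a`,
naturality 2-cells `naturality g : S g ≫ app b ⟶ app a ≫ T g`, compatible with 2-cells,
with `naturality (𝟙 a)` an identity and `naturality` of a composite given by pasting. -/
structure LaxTrans (S T : Strict2Functor B C) extends LaxTransCore S T where
  naturality_id : ∀ a : B,
    naturality (𝟙 a) = eqToHom (by rw [S.map_id, T.map_id, Category.id_comp, Category.comp_id])
  naturality_comp : ∀ {a b c : B} (g : a ⟶ b) (h : b ⟶ c),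
    naturality (g ≫ h) =
      eqToHom (by rw [S.map_comp, Category.assoc]) ≫
      (S.map g ◁ naturality h) ≫
      eqToHom (by rw [Category.assoc]) ≫
      (naturality g ▷ T.map h) ≫
      eqToHom (by rw [T.map_comp, Category.assoc])
  naturality₂ : ∀ {a b : B} {g g' : a ⟶ b} (ζ : g ⟶ g'),
    (S.map₂ ζ ▷ app b) ≫ naturality g' = naturality g ≫ (app a ◁ T.map₂ ζ)

namespace LaxTransCore

variable {S T R : Strict2Functor B C}

/-- Vertical composite of (the data of) lax natural transformations. -/
def vcomp (φ : LaxTransCore S T) (ψ : LaxTransCore T R) : LaxTransCore S R where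
  app a := φ.app a ≫ ψ.app a
  naturality {a b} g :=
    eqToHom (by rw [Category.assoc]) ≫
    (φ.naturality g ▷ ψ.app b) ≫
    eqToHom (by rw [Category.assoc]) ≫
    (φ.app a ◁ ψ.naturality g) ≫
    eqToHom (by rw [Category.assoc])

/-- Post-whiskering of (the data of) a lax natural transformation with a strict 2-functor:
the transformation `Gφ` with components `G (φ a)`. -/
def post (φ : LaxTransCore S T) (G : Strict2Functor C D) :
    LaxTransCore (S.comp G) (T.comp G) where
  app a := G.map (φ.app a)
  naturality {a b} g :=
    eqToHom (G.map_comp _ _).symm ≫ G.map₂ (φ.naturality g) ≫ eqToHom (G.map_comp _ _)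

/-- Pre-whiskering of (the data of) a lax natural transformation with a strict 2-functor:
the transformation `φG` with components `φ (G a)`. -/
def pre {S T : Strict2Functor C D} (φ : LaxTransCore S T) (G : Strict2Functor B C) :
    LaxTransCore (G.comp S) (G.comp T) where
  app a := φ.app (G.obj a)
  naturality {_ _} g := φ.naturality (G.map g)

/-- The identity lax natural transformation on a strict 2-functor. -/
def id (F : Strict2Functor B C) : LaxTransCore F F where
  app a := 𝟙 (F.obj a)
  naturality {_ _} g := eqToHom (by rw [Category.id_comp, Category.comp_id])

end LaxTransCore

/-- `m` is a modification between (the underlying data of) lax natural transformations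
`σ ⇛ τ` if for every 1-cell `g` the modification square commutes. -/
def IsModification {S T : Strict2Functor B C} (σ τ : LaxTransCore S T)
    (m : ∀ a : B, σ.app a ⟶ τ.app a) : Prop :=
  ∀ {a b : B} (g : a ⟶ b),
    (S.map g ◁ m b) ≫ τ.naturality g = σ.naturality g ≫ (m a ▷ T.map g)

/-- A two-level (lax-Gray) adjunction `(F, U, η, ε, f, u)` between strict 2-categories:
strict 2-functors `F, U`, lax natural transformations `η : Id ⟹ U∘F`, `ε : F∘U ⟹ Id`,
modifications `f : (εF)∘(Fη) ⇛ 1_F` and `u : 1_U ⇛ (Uε)∘(ηU)` satisfying the coherence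
equations `[1_η]` and `[1_ε]`. -/
structure LaxGrayAdjunction (X : Type u₁) (A : Type u₂) [Bicategory.{w₁, v₁} X]
    [Bicategory.Strict X] [Bicategory.{w₂, v₂} A] [Bicategory.Strict A] where
  F : Strict2Functor X A
  U : Strict2Functor A X
  η : LaxTrans (Strict2Functor.id X) (F.comp U)
  ε : LaxTrans (U.comp F) (Strict2Functor.id A)
  f : ∀ x : X, F.map (η.app x) ≫ ε.app (F.obj x) ⟶ 𝟙 (F.obj x)
  f_mod : IsModification ((η.toLaxTransCore.post F).vcomp (ε.toLaxTransCore.pre F))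
    (LaxTransCore.id F) f
  u : ∀ a : A, 𝟙 (U.obj a) ⟶ η.app (U.obj a) ≫ U.map (ε.app a)
  u_mod : IsModification (LaxTransCore.id U)
    ((η.toLaxTransCore.pre U).vcomp (ε.toLaxTransCore.post U)) u
  coh_η : ∀ x : X,
    eqToHom (Category.comp_id (η.app x)).symm ≫
    (η.app x ◁ u (F.obj x)) ≫
    eqToHom (Category.assoc _ _ _).symm ≫
    (η.naturality (η.app x) ▷ U.map (ε.app (F.obj x))) ≫
    eqToHom (Category.assoc _ _ _) ≫
    (η.app x ◁ (eqToHom (U.map_comp _ _).symm ≫ U.map₂ (f x) ≫ eqToHom (U.map_id _))) ≫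
    eqToHom (Category.comp_id (η.app x)) = 𝟙 (η.app x)
  coh_ε : ∀ a : A,
    eqToHom (Category.id_comp (ε.app a)).symm ≫
    ((eqToHom (F.map_id _).symm ≫ F.map₂ (u a) ≫ eqToHom (F.map_comp _ _)) ▷ ε.app a) ≫
    eqToHom (Category.assoc _ _ _) ≫
    (F.map (η.app (U.obj a)) ◁ ε.naturality (ε.app a)) ≫
    eqToHom (Category.assoc _ _ _).symm ≫
    (f (U.obj a) ▷ ε.app a) ≫
    eqToHom (Category.id_comp (ε.app a)) = 𝟙 (ε.app a)

namespace LaxGrayAdjunction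

variable {X : Type u₁} {A : Type u₂} [Bicategory.{w₁, v₁} X] [Bicategory.Strict X]
  [Bicategory.{w₂, v₂} A] [Bicategory.Strict A] (adj : LaxGrayAdjunction X A)

/-- The strict 2-endofunctor `T = U ∘ F` of `𝕏` derived from the adjunction. -/
def T : Strict2Functor X X := adj.F.comp adj.U

/-- The lax natural transformation `μ = UεF : T∘T ⟹ T`, with components
`μ_x = U(ε_{Fx})` and naturality cells `μ_g = U(ε_{Fg})`. -/
def μc : LaxTransCore (adj.T.comp adj.T) adj.T :=
  (adj.ε.toLaxTransCore.pre adj.F).post adj.U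

/-- The 2-cell `a_x = U(ε_{ε_{Fx}}) : μ_x ∘ T(μ_x) ⟹ μ_x ∘ μ_{Tx}`. -/
def aCell (x : X) :
    adj.T.map (adj.μc.app x) ≫ adj.μc.app x ⟶ adj.μc.app (adj.T.obj x) ≫ adj.μc.app x :=
  eqToHom (adj.U.map_comp _ _).symm ≫
    adj.U.map₂ (adj.ε.naturality (adj.ε.app (adj.F.obj x))) ≫ eqToHom (adj.U.map_comp _ _)

/-- The 2-cell `p_x = U(f_x) : μ_x ∘ T(η_x) ⟹ 1_{Tx}`. -/
def pCell (x : X) :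
    adj.T.map (adj.η.app x) ≫ adj.μc.app x ⟶ 𝟙 (adj.T.obj x) :=
  eqToHom (adj.U.map_comp _ _).symm ≫ adj.U.map₂ (adj.f x) ≫ eqToHom (adj.U.map_id _)

/-- The 2-cell `q_x = u_{Fx} : 1_{Tx} ⟹ μ_x ∘ η_{Tx}`. -/
def qCell (x : X) : 𝟙 (adj.T.obj x) ⟶ adj.η.app (adj.T.obj x) ≫ adj.μc.app x :=
  adj.u (adj.F.obj x)

/-- `T(a_x) = UF(a_x)`. -/
def TaCell (x : X) :
    adj.T.map (adj.T.map (adj.μc.app x)) ≫ adj.T.map (adj.μc.app x) ⟶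
      adj.T.map (adj.μc.app (adj.T.obj x)) ≫ adj.T.map (adj.μc.app x) :=
  eqToHom (adj.T.map_comp _ _).symm ≫ adj.T.map₂ (adj.aCell x) ≫ eqToHom (adj.T.map_comp _ _)

/-- `T(p_x) = UF(p_x)`. -/
def TpCell (x : X) :
    adj.T.map (adj.T.map (adj.η.app x)) ≫ adj.T.map (adj.μc.app x) ⟶
      𝟙 (adj.T.obj (adj.T.obj x)) :=
  eqToHom (adj.T.map_comp _ _).symm ≫ adj.T.map₂ (adj.pCell x) ≫ eqToHom (adj.T.map_id _)

/-- `T(q_x) = UF(q_x)`. -/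
def TqCell (x : X) :
    𝟙 (adj.T.obj (adj.T.obj x)) ⟶
      adj.T.map (adj.η.app (adj.T.obj x)) ≫ adj.T.map (adj.μc.app x) :=
  eqToHom (adj.T.map_id _).symm ≫ adj.T.map₂ (adj.qCell x) ≫ eqToHom (adj.T.map_comp _ _)

/-- The coherence axiom `[Ma]` at an object `x`. -/
def Ma (x : X) : Prop :=
  (adj.T.map (adj.T.map (adj.μc.app x)) ◁ adj.aCell x) ≫
  eqToHom (Category.assoc _ _ _).symm ≫
  (adj.μc.naturality (adj.μc.app x) ▷ adj.μc.app x) ≫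
  eqToHom (Category.assoc _ _ _) ≫
  (adj.μc.app ((adj.T.comp adj.T).obj x) ◁ adj.aCell x)
  =
  eqToHom (Category.assoc _ _ _).symm ≫
  (adj.TaCell x ▷ adj.μc.app x) ≫
  eqToHom (Category.assoc _ _ _) ≫
  (adj.T.map (adj.μc.app (adj.T.obj x)) ◁ adj.aCell x) ≫
  eqToHom (Category.assoc _ _ _).symm ≫
  (adj.aCell (adj.T.obj x) ▷ adj.μc.app x) ≫
  eqToHom (Category.assoc _ _ _)

/-- The coherence axiom `[Mη]` at an object `x`. -/
def Mη (x : X) : Prop :=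
  eqToHom (Category.comp_id (adj.η.app x)).symm ≫
  (adj.η.app x ◁ adj.qCell x) ≫
  eqToHom (Category.assoc _ _ _).symm ≫
  (adj.η.naturality (adj.η.app x) ▷ adj.μc.app x) ≫
  eqToHom (Category.assoc _ _ _) ≫
  (adj.η.app x ◁ adj.pCell x) ≫
  eqToHom (Category.comp_id (adj.η.app x)) = 𝟙 (adj.η.app x)

/-- The coherence axiom `[Mμ]` at an object `x`. -/
def Mμ (x : X) : Prop :=
  eqToHom (Category.id_comp (adj.μc.app x)).symm ≫
  (adj.TqCell x ▷ adj.μc.app x) ≫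
  eqToHom (Category.assoc _ _ _) ≫
  (adj.T.map (adj.η.app (adj.T.obj x)) ◁ adj.aCell x) ≫
  eqToHom (Category.assoc _ _ _).symm ≫
  (adj.pCell (adj.T.obj x) ▷ adj.μc.app x) ≫
  eqToHom (Category.id_comp (adj.μc.app x)) = 𝟙 (adj.μc.app x)

/-- The coherence axiom `[Mq]` at an object `x`. -/
def Mq (x : X) : Prop :=
  eqToHom (Category.comp_id (adj.μc.app x)).symm ≫
  (adj.μc.app x ◁ adj.qCell x) ≫
  eqToHom (Category.assoc _ _ _).symm ≫
  (adj.η.naturality (adj.μc.app x) ▷ adj.μc.app x) ≫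
  eqToHom (Category.assoc _ _ _) ≫
  (adj.η.app ((adj.T.comp adj.T).obj x) ◁ adj.aCell x)
  =
  eqToHom (Category.id_comp (adj.μc.app x)).symm ≫
  (adj.qCell (adj.T.obj x) ▷ adj.μc.app x) ≫
  eqToHom (Category.assoc _ _ _)

/-- The coherence axiom `[Mp]` at an object `x`. -/
def Mp (x : X) : Prop :=
  (adj.T.map (adj.T.map (adj.η.app x)) ◁ adj.aCell x) ≫
  eqToHom (Category.assoc _ _ _).symm ≫
  (adj.μc.naturality (adj.η.app x) ▷ adj.μc.app x) ≫
  eqToHom (Category.assoc _ _ _) ≫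
  (adj.μc.app x ◁ adj.pCell x) ≫
  eqToHom (Category.comp_id (adj.μc.app x))
  =
  eqToHom (Category.assoc _ _ _).symm ≫
  (adj.TpCell x ▷ adj.μc.app x) ≫
  eqToHom (Category.id_comp (adj.μc.app x))

end LaxGrayAdjunction


/-!
`[Mp]` is the image under `U` of the 2-naturality of `ε` at the 2-cell
`f_x : F(η_x) ≫ ε_{Fx} ⟶ 𝟙_{Fx}`: the naturality cell of `ε` at the composite `F(η_x) ≫ ε_{Fx}`
is the pasting of `ε_{F(η_x)}` and `ε_{ε_{Fx}}`, the one at `𝟙_{Fx}` is trivial, and `U` carries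
`ε_{ε_{Fx}}`, `ε_{F(η_x)}`, `f_x` and `FU(f_x)` to `a_x`, `μ_{η_x}`, `p_x` and `T(p_x)`.
-/

namespace LaxTrans

variable {S T : Strict2Functor B C} (φ : LaxTrans S T)

theorem naturality₂_of_comp_eq_id {a b : B} {g : a ⟶ b} {h : b ⟶ a} (ζ : g ≫ h ⟶ 𝟙 a) :
    (S.map g ◁ φ.naturality h) ≫ eqToHom (Category.assoc _ _ _).symm ≫
      (φ.naturality g ▷ T.map h) ≫ eqToHom (Category.assoc _ _ _) ≫
      (φ.app a ◁ (eqToHom (T.map_comp _ _).symm ≫ T.map₂ ζ ≫ eqToHom (T.map_id _))) ≫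
      eqToHom (Category.comp_id _) =
    eqToHom (Category.assoc _ _ _).symm ≫
      ((eqToHom (S.map_comp _ _).symm ≫ S.map₂ ζ ≫ eqToHom (S.map_id _)) ▷ φ.app a) ≫
      eqToHom (Category.id_comp _) := by
  have h := φ.naturality₂ ζ
  rw [φ.naturality_id, φ.naturality_comp, comp_eqToHom_iff] at h
  simp [h]

theorem naturality₂_of_comp_eq_id_post (G : Strict2Functor C D) {a b : B} {g : a ⟶ b}
    {h : b ⟶ a} (ζ : g ≫ h ⟶ 𝟙 a) :
    (G.map (S.map g) ◁
        (eqToHom (G.map_comp _ _).symm ≫ G.map₂ (φ.naturality h) ≫ eqToHom (G.map_comp _ _))) ≫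
      eqToHom (Category.assoc _ _ _).symm ≫
      ((eqToHom (G.map_comp _ _).symm ≫ G.map₂ (φ.naturality g) ≫ eqToHom (G.map_comp _ _)) ▷
        G.map (T.map h)) ≫
      eqToHom (Category.assoc _ _ _) ≫
      (G.map (φ.app a) ◁
        (eqToHom (by rw [T.map_comp, G.map_comp]) ≫ G.map₂ (T.map₂ ζ) ≫
          eqToHom (by rw [T.map_id, G.map_id]))) ≫
      eqToHom (Category.comp_id _) =
    eqToHom (Category.assoc _ _ _).symm ≫
      ((eqToHom (by rw [S.map_comp, G.map_comp]) ≫ G.map₂ (S.map₂ ζ) ≫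
        eqToHom (by rw [S.map_id, G.map_id])) ▷ G.map (φ.app a)) ≫
      eqToHom (Category.id_comp _) := by
  have hsource : G.map (S.map g) ≫ G.map (S.map h) ≫ G.map (φ.app a) =
      G.map (S.map g ≫ S.map h ≫ φ.app a) := by
    rw [G.map_comp, G.map_comp]
  have hG := congrArg (eqToHom hsource ≫ G.map₂ ·) (φ.naturality₂_of_comp_eq_id ζ)
  simp only [Bicategory.whiskerLeft_comp, Bicategory.whiskerLeft_eqToHom, Category.assoc,
    eqToHom_trans, eqToHom_trans_assoc, G.map₂_comp, G.map₂_whiskerLeft, G.map₂_eqToHom,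
    G.map₂_whiskerRight, Bicategory.comp_whiskerRight, Bicategory.eqToHom_whiskerRight] at hG ⊢
  exact hG

end LaxTrans

theorem Strict2Functor.eqToHom_comp_map₂_conj (G : Strict2Functor B C) {a b : B}
    {f f' g g' : a ⟶ b} {x y : G.obj a ⟶ G.obj b} (P : x = G.map f) (p : f = f')
    (θ : f' ⟶ g') (q : g' = g) (Q : G.map g = y) :
    eqToHom P ≫ G.map₂ (eqToHom p ≫ θ ≫ eqToHom q) ≫ eqToHom Q =
      eqToHom (P.trans (congrArg G.map p)) ≫ G.map₂ θ ≫ eqToHom ((congrArg G.map q).trans Q) := by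
  subst p q
  simp

theorem LaxGrayAdjunction.TpCell_eq {X : Type u₁} {A : Type u₂} [Bicategory.{w₁, v₁} X]
    [Bicategory.Strict X] [Bicategory.{w₂, v₂} A] [Bicategory.Strict A]
    (adj : LaxGrayAdjunction X A) (x : X) :
    adj.TpCell x =
      eqToHom (by
        dsimp only [T, μc, Strict2Functor.comp, LaxTransCore.post]
        rw [adj.U.map_comp, adj.F.map_comp, adj.U.map_comp]; rfl) ≫
      adj.U.map₂ ((adj.U.comp adj.F).map₂ (adj.f x)) ≫
      eqToHom ((congrArg (fun k => adj.U.map (adj.F.map k)) (adj.U.map_id _)).trans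
        ((congrArg adj.U.map (adj.F.map_id _)).trans (adj.U.map_id _))) :=
  adj.T.eqToHom_comp_map₂_conj _ _ _ _ _

/-- Given a two-level (lax-Gray) adjunction, the derived data satisfies the
coherence axiom `[Mp]` at every object `x`. -/
theorem laxGrayAdjunction_Mp {X : Type u₁} {A : Type u₂}
    [Bicategory.{w₁, v₁} X] [Bicategory.Strict X] [Bicategory.{w₂, v₂} A]
    [Bicategory.Strict A] (adj : LaxGrayAdjunction X A) (x : X) : adj.Mp x := by
  rw [LaxGrayAdjunction.Mp, adj.TpCell_eq]
  exact adj.ε.naturality₂_of_comp_eq_id_post adj.U (adj.f x)
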